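/- arXiv:2301.13187 — 2 statements merged into one kernel-verified Lean document; each statement's English description precedes it below -/
import Mathlib

section
/- Let x* be a minimizer of the dual flow diffusion problem. Then for any two nodes i and j and any path P = (i = v₀, v₁, …, v_r = j) in G connecting them, x*_i − x*_j ≤ ‖Δ‖₁ · Σ_{ℓ=1}^{r} 1/w_{v_{ℓ−1} v_ℓ}. -/
/-!
STATEMENT 7. If `x*` minimizes the dual flow diffusion objective over `x ≥ 0`, then for
any nodes `i, j` and any path `i = v 0, v 1, …, v r = j` in `G` (consecutive vertices
joined by edges, i.e. `w (v ℓ) (v (ℓ+1)) > 0`),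
`x* i − x* j ≤ ‖Δ‖₁ · ∑_{ℓ=0}^{r−1} 1 / w (v ℓ) (v (ℓ+1))`.
-/

/-- Dual flow diffusion objective `½ xᵀLx + xᵀ(T − Δ)` written with edge weights. -/
noncomputable def dualObj {n : ℕ} (w : Fin n → Fin n → ℝ) (Δ T : Fin n → ℝ)
    (x : Fin n → ℝ) : ℝ :=
  (1 / 4) * ∑ i, ∑ j, w i j * (x i - x j) ^ 2 + ∑ i, x i * (T i - Δ i)


lemma dualObj_update {n : ℕ} (w : Fin n → Fin n → ℝ) (Δ T : Fin n → ℝ)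
    (hsymm : ∀ i j, w i j = w j i) (hloop : ∀ i, w i i = 0)
    (x : Fin n → ℝ) (k : Fin n) (t : ℝ) :
    dualObj w Δ T (fun i => x i + t * (if i = k then 1 else 0)) =
      dualObj w Δ T x + t * ((∑ j, w k j * (x k - x j)) + (T k - Δ k))
        + t ^ 2 * (∑ j, w k j) / 2 := by
  unfold dualObj
  have expand : ∀ i j : Fin n,
      w i j * ((x i + t * (if i = k then 1 else 0)) - (x j + t * (if j = k then 1 else 0))) ^ 2
      = w i j * (x i - x j) ^ 2
        + (2 * t) * ((if i = k then w i j * (x i - x j) else 0)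
            - (if j = k then w i j * (x i - x j) else 0))
        + t ^ 2 * ((if i = k then w i j else 0) + (if j = k then w i j else 0)
            - 2 * (if i = k then (if j = k then w i j else 0) else 0)) := by
    intro i j
    split_ifs <;> ring
  have hlin : ∀ i : Fin n,
      (x i + t * (if i = k then 1 else 0)) * (T i - Δ i)
        = x i * (T i - Δ i) + (if i = k then t * (T k - Δ k) else 0) := by
    intro i
    split_ifs with h
    · subst h; ring
    · ring
  simp only [expand, hlin, Finset.sum_add_distrib, Finset.sum_sub_distrib,
    Finset.sum_ite_eq', Finset.mem_univ, if_true, ← Finset.mul_sum]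
  have h5 : ∑ i : Fin n, ∑ j, (if i = k then w i j * (x i - x j) else 0)
      = ∑ j, w k j * (x k - x j) := by
    rw [Finset.sum_comm]; simp
  have h6 : ∑ i : Fin n, ∑ j, (if i = k then w i j else 0) = ∑ j, w k j := by
    rw [Finset.sum_comm]; simp
  have h7 : ∑ i : Fin n, ∑ j, (if i = k then (if j = k then w i j else 0) else 0)
      = (0:ℝ) := by
    rw [Finset.sum_comm]; simp [hloop]
  have h1 : ∑ i : Fin n, ∑ j, (if j = k then w i j * (x i - x j) else 0)
      = ∑ i : Fin n, w i k * (x i - x k) := by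
    simp
  have h2 : ∑ i : Fin n, ∑ j, (if j = k then w i j else 0) = ∑ i : Fin n, w i k := by
    simp
  have h3 : ∑ i : Fin n, w i k * (x i - x k) = - ∑ j, w k j * (x k - x j) := by
    rw [← Finset.sum_neg_distrib]
    exact Finset.sum_congr rfl fun i _ => by rw [hsymm i k]; ring
  have h4 : ∑ i : Fin n, w i k = ∑ j, w k j :=
    Finset.sum_congr rfl fun i _ => hsymm i k
  rw [h5, h6, h7, h3, h4]
  ring

lemma key_grad {n : ℕ} (w : Fin n → Fin n → ℝ) (Δ T : Fin n → ℝ)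
    (hsymm : ∀ i j, w i j = w j i) (hnonneg : ∀ i j, 0 ≤ w i j)
    (hloop : ∀ i, w i i = 0)
    (xstar : Fin n → ℝ) (hx_nonneg : ∀ i, 0 ≤ xstar i)
    (hx_min : ∀ y : Fin n → ℝ, (∀ i, 0 ≤ y i) →
      dualObj w Δ T xstar ≤ dualObj w Δ T y)
    (k : Fin n) (hk : 0 < xstar k) :
    ∑ j, w k j * (xstar k - xstar j) ≤ Δ k - T k := by
  set g : ℝ := (∑ j, w k j * (xstar k - xstar j)) + (T k - Δ k) with hg
  set c : ℝ := ∑ j, w k j with hc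
  have hcnn : 0 ≤ c := Finset.sum_nonneg fun j _ => hnonneg k j
  have hineq : ∀ t : ℝ, -xstar k ≤ t →
      0 ≤ t * g + t ^ 2 * c / 2 := by
    intro t ht
    have hy : ∀ i, 0 ≤ xstar i + t * (if i = k then 1 else 0) := by
      intro i
      by_cases h : i = k
      · subst h; simp; linarith
      · simp [h]; exact hx_nonneg i
    have := hx_min _ hy
    rw [dualObj_update w Δ T hsymm hloop xstar k t] at this
    linarith
  -- show g ≤ 0
  have hg0 : g ≤ 0 := by
    by_contra hpos
    push_neg at hpos
    set s : ℝ := min (xstar k) (g / (c + 1)) with hs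
    have hspos : 0 < s := lt_min hk (div_pos hpos (by linarith))
    have hs1 : s ≤ xstar k := min_le_left _ _
    have hs2 : s ≤ g / (c + 1) := min_le_right _ _
    have hs3 : s * (c + 1) ≤ g :=
      (le_div_iff₀ (by linarith : (0:ℝ) < c + 1)).mp hs2
    have h := hineq (-s) (by linarith)
    have : 0 ≤ -s * g + s ^ 2 * c / 2 := by nlinarith
    nlinarith
  linarith

lemma edge_bound {n : ℕ} (w : Fin n → Fin n → ℝ) (Δ T : Fin n → ℝ)
    (hsymm : ∀ i j, w i j = w j i) (hnonneg : ∀ i j, 0 ≤ w i j)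
    (hloop : ∀ i, w i i = 0)
    (hΔ : ∀ i, 0 ≤ Δ i) (hT : ∀ i, 1 ≤ T i)
    (xstar : Fin n → ℝ) (hx_nonneg : ∀ i, 0 ≤ xstar i)
    (hx_min : ∀ y : Fin n → ℝ, (∀ i, 0 ≤ y i) →
      dualObj w Δ T xstar ≤ dualObj w Δ T y)
    (a b : Fin n) (hab : 0 < w a b) :
    xstar a - xstar b ≤ (∑ i', |Δ i'|) * (1 / w a b) := by
  have hΔsum : (0:ℝ) ≤ ∑ i', |Δ i'| := Finset.sum_nonneg fun i _ => abs_nonneg _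
  rcases le_or_gt (xstar a) (xstar b) with hle | hlt
  · have : 0 ≤ (∑ i', |Δ i'|) * (1 / w a b) :=
      mul_nonneg hΔsum (by positivity)
    linarith
  · set S : Finset (Fin n) := Finset.univ.filter (fun k => xstar a ≤ xstar k) with hS
    have haS : a ∈ S := by simp [hS]
    have hbS : b ∉ S := by simp [hS]; linarith
    have hkey : ∀ k ∈ S, ∑ j, w k j * (xstar k - xstar j) ≤ Δ k - T k := by
      intro k hk
      have hxk : xstar a ≤ xstar k := by simpa [hS] using hk
      exact key_grad w Δ T hsymm hnonneg hloop xstar hx_nonneg hx_min k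
        (lt_of_le_of_lt (hx_nonneg b) (lt_of_lt_of_le hlt hxk))
    have hsum1 : ∑ k ∈ S, ∑ j, w k j * (xstar k - xstar j)
        ≤ ∑ i', |Δ i'| := by
      calc ∑ k ∈ S, ∑ j, w k j * (xstar k - xstar j)
          ≤ ∑ k ∈ S, (Δ k - T k) := Finset.sum_le_sum hkey
        _ ≤ ∑ k ∈ S, |Δ k| := Finset.sum_le_sum fun k _ => by
            have := hΔ k; have := hT k; rw [abs_of_nonneg (hΔ k)]; linarith
        _ ≤ ∑ i', |Δ i'| := Finset.sum_le_sum_of_subset_of_nonneg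
            (Finset.subset_univ S) (fun i _ _ => abs_nonneg _)
    -- split inner sum over S and Sᶜ
    have hsplit : ∀ k : Fin n, ∑ j, w k j * (xstar k - xstar j)
        = ∑ j ∈ S, w k j * (xstar k - xstar j)
          + ∑ j ∈ Sᶜ, w k j * (xstar k - xstar j) := by
      intro k
      rw [← Finset.sum_add_sum_compl S]
    have hwithin : ∑ k ∈ S, ∑ j ∈ S, w k j * (xstar k - xstar j) = 0 := by
      have h := Finset.sum_comm (s := S) (t := S)
        (f := fun k j => w k j * (xstar k - xstar j))
      have : ∑ k ∈ S, ∑ j ∈ S, w k j * (xstar k - xstar j)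
          = - ∑ k ∈ S, ∑ j ∈ S, w k j * (xstar k - xstar j) := by
        nth_rewrite 2 [h]
        rw [← Finset.sum_neg_distrib]
        refine Finset.sum_congr rfl fun k _ => ?_
        rw [← Finset.sum_neg_distrib]
        exact Finset.sum_congr rfl fun j _ => by rw [hsymm k j]; ring
      linarith
    have hcross_ge : w a b * (xstar a - xstar b)
        ≤ ∑ k ∈ S, ∑ j ∈ Sᶜ, w k j * (xstar k - xstar j) := by
      have hterm : ∀ k ∈ S, 0 ≤ ∑ j ∈ Sᶜ, w k j * (xstar k - xstar j) := by
        intro k hk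
        refine Finset.sum_nonneg fun j hj => ?_
        have hxk : xstar a ≤ xstar k := by simpa [hS] using hk
        have hxj : xstar j < xstar a := by
          have := Finset.mem_compl.mp hj; simp [hS] at this; linarith
        exact mul_nonneg (hnonneg k j) (by linarith)
      have h1 : w a b * (xstar a - xstar b)
          ≤ ∑ j ∈ Sᶜ, w a j * (xstar a - xstar j) := by
        refine Finset.single_le_sum (f := fun j => w a j * (xstar a - xstar j))
          (fun j hj => ?_) (Finset.mem_compl.mpr hbS)
        have hxj : xstar j < xstar a := by
          have := Finset.mem_compl.mp hj; simp [hS] at this; linarith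
        exact mul_nonneg (hnonneg a j) (by linarith)
      calc w a b * (xstar a - xstar b)
          ≤ ∑ j ∈ Sᶜ, w a j * (xstar a - xstar j) := h1
        _ ≤ ∑ k ∈ S, ∑ j ∈ Sᶜ, w k j * (xstar k - xstar j) :=
            Finset.single_le_sum (f := fun k => ∑ j ∈ Sᶜ, w k j * (xstar k - xstar j))
              hterm haS
    have hfinal : w a b * (xstar a - xstar b) ≤ ∑ i', |Δ i'| := by
      have := hsum1
      simp only [hsplit, Finset.sum_add_distrib] at this
      rw [hwithin] at this
      linarith
    rw [mul_one_div, le_div_iff₀ hab]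
    linarith [hfinal]

theorem stmt7 {n : ℕ} (w : Fin n → Fin n → ℝ) (Δ T : Fin n → ℝ)
    (hsymm : ∀ i j, w i j = w j i)
    (hnonneg : ∀ i j, 0 ≤ w i j)
    (hloop : ∀ i, w i i = 0)
    (hconn : ∀ i j : Fin n, Relation.ReflTransGen (fun a b => 0 < w a b) i j)
    (hΔ : ∀ i, 0 ≤ Δ i) (hT : ∀ i, 1 ≤ T i)
    (xstar : Fin n → ℝ)
    (hx_nonneg : ∀ i, 0 ≤ xstar i)
    (hx_min : ∀ y : Fin n → ℝ, (∀ i, 0 ≤ y i) →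
      dualObj w Δ T xstar ≤ dualObj w Δ T y) :
    ∀ (i j : Fin n) (r : ℕ) (v : ℕ → Fin n),
      v 0 = i → v r = j →
      (∀ ℓ < r, 0 < w (v ℓ) (v (ℓ + 1))) →
      xstar i - xstar j ≤
        (∑ i', |Δ i'|) * ∑ ℓ ∈ Finset.range r, 1 / w (v ℓ) (v (ℓ + 1)) := by
  intro i j r v h0 hr hedges
  subst h0; subst hr
  induction r with
  | zero => simp
  | succ r ih =>
    have hih := ih (fun ℓ hℓ => hedges ℓ (Nat.lt_succ_of_lt hℓ))
    have hedge := edge_bound w Δ T hsymm hnonneg hloop hΔ hT xstar hx_nonneg hx_min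
      (v r) (v (r + 1)) (hedges r (Nat.lt_succ_self r))
    rw [Finset.sum_range_succ, mul_add]
    linarith
end

section
/- Let 0 < δ ≤ 1 and ε > 0. Let K be a set of k vertices inside a vertex set V of size n, and suppose each of the k(n−k) unordered pairs (i,j) with i ∈ K, j ∈ V\K is independently joined by an edge with probability q. Then with probability at least 1 − k^{−ε/3}, cut_G(K) ≤ (1+δ)·q·k·(n−k) + (e·ε/δ² + ε/3)·log k, where cut_G(K) is the number of realized edges between K and V\K. -/
/-!
Chernoff's bound with `t = log (1 + δ)`: the cut is a sum of `k (n - k)` independent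
indicators, so its moment generating function at `t` is
`(1 + δ q)^(k (n - k)) ≤ exp (δ q k (n - k))`. The inequality `δ ≤ (1 + δ) log (1 + δ)` absorbs
this mean term into `t (1 + δ) q k (n - k)`, and `log (1 + δ) (e ε / δ² + ε / 3) ≥ ε / 3` turns
the remaining factor into `exp (-(ε / 3) log k) = k^(-ε/3)`.
-/

open MeasureTheory ProbabilityTheory Real

section Chernoff

variable {Ω : Type*} [MeasurableSpace Ω] {μ : Measure Ω} [IsProbabilityMeasure μ]

lemma mgf_ite_one_zero {B : Ω → Bool} (hB : Measurable B) (t : ℝ) :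
    mgf (fun ω => if B ω = true then (1 : ℝ) else 0) μ t =
      1 + (exp t - 1) * μ.real {ω | B ω = true} := by
  have hs : MeasurableSet {ω | B ω = true} := hB (measurableSet_singleton true)
  have hexp : (fun ω => exp (t * if B ω = true then (1 : ℝ) else 0)) =
      fun ω => 1 + (exp t - 1) * {ω | B ω = true}.indicator 1 ω := by
    funext ω
    by_cases h : B ω = true <;> simp [h]
  have hind : Integrable ({ω | B ω = true}.indicator (1 : Ω → ℝ)) μ :=
    (integrable_const 1).indicator hs
  rw [mgf, hexp, integral_add (integrable_const _) (hind.const_mul _), integral_const,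
    integral_const_mul, integral_indicator_one hs]
  simp

theorem measureReal_card_ge_le_exp {ι : Type*} [Fintype ι] {Y : ι → Ω → Bool}
    (hY : ∀ i, Measurable (Y i)) (hindep : iIndepFun Y μ) {q : ℝ} (hq : 0 ≤ q)
    (hber : ∀ i, μ {ω | Y i ω = true} = ENNReal.ofReal q) {t : ℝ} (ht : 0 ≤ t) (a : ℝ) :
    μ.real {ω | a ≤ (Finset.univ.filter (fun i => Y i ω = true)).card} ≤
      exp (-t * a + (exp t - 1) * q * Fintype.card ι) := by
  set Z : ι → Ω → ℝ := fun i ω => if Y i ω = true then 1 else 0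
  have hZ : ∀ i, Measurable (Z i) := fun i =>
    Measurable.ite (hY i (measurableSet_singleton true)) measurable_const measurable_const
  have hZindep : iIndepFun Z μ :=
    hindep.comp (fun _ b => if b = true then (1 : ℝ) else 0) fun _ => Measurable.of_discrete
  have hcard : ∀ ω, ((Finset.univ.filter (fun i => Y i ω = true)).card : ℝ) =
      (∑ i, Z i) ω := by
    intro ω
    simp [Z, Finset.sum_apply, Finset.sum_boole]
  have hint : Integrable (fun ω => exp (t * (∑ i, Z i) ω)) μ :=
    integrable_exp_mul_of_le t (Fintype.card ι) ht (by fun_prop)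
      (Filter.Eventually.of_forall fun ω => by rw [← hcard]; exact_mod_cast Finset.card_le_univ _)
  have hmgf : mgf (∑ i, Z i) μ t = (1 + (exp t - 1) * q) ^ Fintype.card ι := by
    rw [hZindep.mgf_sum hZ, Finset.prod_eq_pow_card fun i _ => ?_, Finset.card_univ]
    rw [mgf_ite_one_zero (hY i), measureReal_def, hber i, ENNReal.toReal_ofReal hq]
  have hmgf_le :
      (1 + (exp t - 1) * q) ^ Fintype.card ι ≤ exp ((exp t - 1) * q * Fintype.card ι) := by
    have hx : 0 ≤ (exp t - 1) * q := mul_nonneg (by linarith [add_one_le_exp t]) hq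
    calc (1 + (exp t - 1) * q) ^ Fintype.card ι ≤ exp ((exp t - 1) * q) ^ Fintype.card ι := by
          gcongr; linarith [add_one_le_exp ((exp t - 1) * q)]
      _ = _ := by rw [← exp_nat_mul]; ring_nf
  simp_rw [hcard]
  calc _ ≤ exp (-t * a) * mgf (∑ i, Z i) μ t := measure_ge_le_exp_mul_mgf a ht hint
    _ ≤ exp (-t * a) * exp ((exp t - 1) * q * Fintype.card ι) := by rw [hmgf]; gcongr
    _ = _ := (exp_add _ _).symm

lemma ofReal_one_sub_le_measure_le {f : Ω → ℝ} {a p : ℝ} (h : μ.real {ω | a ≤ f ω} ≤ p) :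
    ENNReal.ofReal (1 - p) ≤ μ {ω | f ω ≤ a} := by
  have hp : 0 ≤ p := measureReal_nonneg.trans h
  have hcompl : μ {ω | f ω ≤ a}ᶜ ≤ ENNReal.ofReal p :=
    calc μ {ω | f ω ≤ a}ᶜ ≤ μ {ω | a ≤ f ω} :=
          measure_mono fun ω (hω : ¬f ω ≤ a) => (not_le.mp hω).le
      _ = ENNReal.ofReal (μ.real {ω | a ≤ f ω}) := (ofReal_measureReal (measure_ne_top _ _)).symm
      _ ≤ ENNReal.ofReal p := ENNReal.ofReal_le_ofReal h
  rw [ENNReal.ofReal_sub _ hp, ENNReal.ofReal_one, tsub_le_iff_right]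
  calc 1 = μ Set.univ := measure_univ.symm
    _ ≤ μ {ω | f ω ≤ a} + μ {ω | f ω ≤ a}ᶜ := measure_univ_le_add_compl _
    _ ≤ μ {ω | f ω ≤ a} + ENNReal.ofReal p := by gcongr

end Chernoff

lemma le_one_add_mul_log_one_add {δ : ℝ} (hδ : -1 < δ) : δ ≤ (1 + δ) * log (1 + δ) := by
  have h := one_sub_inv_le_log_of_pos (x := 1 + δ) (by linarith)
  have hpos : 0 < 1 + δ := by linarith
  calc δ = (1 + δ) * (1 - (1 + δ)⁻¹) := by field_simp; ring
    _ ≤ _ := by gcongr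

lemma div_three_le_log_one_add_mul {δ ε : ℝ} (hδ0 : 0 < δ) (hδ1 : δ ≤ 1) (hε : 0 ≤ ε) :
    ε / 3 ≤ log (1 + δ) * (exp 1 * ε / δ ^ 2 + ε / 3) := by
  have hlog : δ / 2 ≤ log (1 + δ) := by
    have := le_one_add_mul_log_one_add (show -1 < δ by linarith)
    nlinarith
  have he : 1 ≤ exp 1 := by linarith [add_one_le_exp 1]
  calc ε / 3 ≤ ε / (2 * δ) := by
        gcongr; linarith
    _ ≤ exp 1 * ε / (2 * δ) := by gcongr; nlinarith
    _ = δ / 2 * (exp 1 * ε / δ ^ 2) := by field_simp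
    _ ≤ δ / 2 * (exp 1 * ε / δ ^ 2 + ε / 3) := by gcongr; linarith
    _ ≤ _ := by gcongr

lemma chernoff_exponent_le {δ ε M L : ℝ} (hδ0 : 0 < δ) (hδ1 : δ ≤ 1) (hε : 0 ≤ ε)
    (hM : 0 ≤ M) (hL : 0 ≤ L) :
    -log (1 + δ) * ((1 + δ) * M + (exp 1 * ε / δ ^ 2 + ε / 3) * L) + δ * M ≤
      -(ε / 3) * L := by
  have h1 := mul_le_mul_of_nonneg_right (le_one_add_mul_log_one_add (show -1 < δ by linarith)) hM
  have h2 := mul_le_mul_of_nonneg_right (div_three_le_log_one_add_mul hδ0 hδ1 hε) hL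
  linarith

theorem stmt11_general (n k : ℕ) (hkn : k < n) (δ ε q : ℝ)
    (hδ0 : 0 < δ) (hδ1 : δ ≤ 1) (hε : 0 < ε)
    (hq0 : 0 ≤ q)
    (Ω : Type) (_mΩ : MeasurableSpace Ω) (μ : Measure Ω) [IsProbabilityMeasure μ]
    (X : Fin k → Fin (n - k) → Ω → Bool)
    (hmeas : ∀ i j, Measurable (X i j))
    (hindep : iIndepFun
      (fun e : Fin k × Fin (n - k) => X e.1 e.2) μ)
    (hber : ∀ i j, μ {ω | X i j ω = true} = ENNReal.ofReal q) :
    ENNReal.ofReal (1 - (k : ℝ) ^ (-(ε / 3))) ≤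
      μ {ω | ((Finset.univ.filter
          (fun e : Fin k × Fin (n - k) => X e.1 e.2 ω = true)).card : ℝ) ≤
        (1 + δ) * q * k * ((n : ℝ) - k) +
          (Real.exp 1 * ε / δ ^ 2 + ε / 3) * Real.log k} := by
  obtain rfl | hk := Nat.eq_zero_or_pos k
  · simp [ENNReal.ofReal_le_one, Real.rpow_nonneg]
  have hcard : (Fintype.card (Fin k × Fin (n - k)) : ℝ) = k * ((n : ℝ) - k) := by
    simp [Nat.cast_sub hkn.le]
  have hmass : 0 ≤ q * (k * ((n : ℝ) - k)) :=
    mul_nonneg hq0 (mul_nonneg k.cast_nonneg (sub_nonneg.mpr (by exact_mod_cast hkn.le)))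
  apply ofReal_one_sub_le_measure_le
  refine (measureReal_card_ge_le_exp (fun e : Fin k × Fin (n - k) => hmeas e.1 e.2) hindep hq0
    (fun e : Fin k × Fin (n - k) => hber e.1 e.2)
    (log_nonneg (by linarith : (1 : ℝ) ≤ 1 + δ)) _).trans ?_
  rw [exp_log (by linarith), add_sub_cancel_left, hcard, rpow_def_of_pos (by exact_mod_cast hk),
    mul_comm (log _)]
  gcongr
  exact le_of_eq_of_le (by ring) (chernoff_exponent_le hδ0 hδ1 hε.le hmass (log_natCast_nonneg k))

theorem stmt11 (n k : ℕ) (hkn : k < n) (δ ε q : ℝ)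
    (hδ0 : 0 < δ) (hδ1 : δ ≤ 1) (hε : 0 < ε)
    (hq0 : 0 ≤ q) (hq1 : q ≤ 1)
    (Ω : Type) (_mΩ : MeasurableSpace Ω) (μ : Measure Ω) [IsProbabilityMeasure μ]
    (X : Fin k → Fin (n - k) → Ω → Bool)
    (hmeas : ∀ i j, Measurable (X i j))
    (hindep : iIndepFun
      (fun e : Fin k × Fin (n - k) => X e.1 e.2) μ)
    (hber : ∀ i j, μ {ω | X i j ω = true} = ENNReal.ofReal q) :
    ENNReal.ofReal (1 - (k : ℝ) ^ (-(ε / 3))) ≤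
      μ {ω | ((Finset.univ.filter
          (fun e : Fin k × Fin (n - k) => X e.1 e.2 ω = true)).card : ℝ) ≤
        (1 + δ) * q * k * ((n : ℝ) - k) +
          (Real.exp 1 * ε / δ ^ 2 + ε / 3) * Real.log k} :=
  stmt11_general n k hkn δ ε q hδ0 hδ1 hε hq0 Ω _mΩ μ X hmeas hindep hber
end
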